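/- Let ξ : ℝ³ → [0,1] be a bounded measurable function, P⁰ an orthogonal projector, and Q a self-adjoint Hilbert–Schmidt operator with 0 ≤ Q + P⁰ ≤ 1. Then the localized inequality ξ Q² ξ ≤ ξ Q⁺⁺ ξ − ξ Q⁻⁻ ξ holds, where ξ also denotes the multiplication operator by ξ. -/

import Mathlib

open ContinuousLinearMap MeasureTheory

/-- `Q` is a Hilbert–Schmidt operator: `∑ ‖Q e i‖²` is finite for some
(equivalently, any) Hilbert basis. -/
def IsHilbertSchmidt {H : Type*} [NormedAddCommGroup H] [InnerProductSpace ℂ H]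
    [CompleteSpace H] (Q : H →L[ℂ] H) : Prop :=
  ∃ (ι : Type) (b : HilbertBasis ι ℂ H), Summable fun i => ‖Q (b i)‖ ^ 2

/-! With `R = Q + P⁰`, the idempotence of `P⁰` gives the ring identity
`Q⁺⁺ − Q⁻⁻ − Q² = R − R²`, and `0 ≤ R ≤ 1` forces `R² ≤ R` by the continuous functional calculus.
Multiplication by the real function `ξ` is self-adjoint, so conjugating by it preserves
positivity. -/

lemma IsIdempotentElem.compl_mul_mul_compl_sub_mul_mul_sub_mul_self {R : Type*} [Ring R]
    {p : R} (hp : IsIdempotentElem p) (q : R) :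
    (1 - p) * q * (1 - p) - p * q * p - q * q = (q + p) - (q + p) * (q + p) := by
  have hpp : p * p = p := hp
  simp only [mul_sub, sub_mul, mul_one, one_mul, add_mul, mul_add, hpp]
  abel

lemma CStarAlgebra.mul_self_le_self {A : Type*} [CStarAlgebra A] [PartialOrder A]
    [StarOrderedRing A] {a : A} (ha₀ : 0 ≤ a) (ha₁ : a ≤ 1) : a * a ≤ a := by
  simpa [sq] using CStarAlgebra.pow_antitone ha₀ ha₁ (show 1 ≤ 2 by norm_num)

lemma MeasureTheory.Lp.isSelfAdjoint_of_coeFn_ae_eq_ofReal_mul {α : Type*}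
    [MeasurableSpace α] {μ : Measure α} (ξ : α → ℝ) (M : Lp ℂ 2 μ →L[ℂ] Lp ℂ 2 μ)
    (hM : ∀ f : Lp ℂ 2 μ, (M f : α → ℂ) =ᵐ[μ] fun x => (ξ x : ℂ) * f x) :
    IsSelfAdjoint M := by
  rw [isSelfAdjoint_iff_isSymmetric]
  intro f g
  simp only [coe_coe, L2.inner_def]
  refine integral_congr_ae ?_
  filter_upwards [hM f, hM g] with x hf hg
  simp only [hf, hg, RCLike.inner_apply, map_mul, Complex.conj_ofReal]
  ring

theorem stmt_4_general
    (ξ : EuclideanSpace ℝ (Fin 3) → ℝ)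
    (M : Lp ℂ 2 (volume : Measure (EuclideanSpace ℝ (Fin 3)))
        →L[ℂ] Lp ℂ 2 (volume : Measure (EuclideanSpace ℝ (Fin 3))))
    (hM : ∀ f : Lp ℂ 2 (volume : Measure (EuclideanSpace ℝ (Fin 3))),
      (M f : EuclideanSpace ℝ (Fin 3) → ℂ) =ᵐ[volume] fun x => (ξ x : ℂ) * f x)
    (Q P0 : Lp ℂ 2 (volume : Measure (EuclideanSpace ℝ (Fin 3)))
        →L[ℂ] Lp ℂ 2 (volume : Measure (EuclideanSpace ℝ (Fin 3))))
    (hP0 : IsIdempotentElem P0)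
    (hpos : (Q + P0).IsPositive) (hle : (1 - (Q + P0)).IsPositive) :
    (M * ((1 - P0) * Q * (1 - P0)) * M - M * (P0 * Q * P0) * M
      - M * (Q * Q) * M).IsPositive := by
  have hMsa : IsSelfAdjoint M := Lp.isSelfAdjoint_of_coeFn_ae_eq_ofReal_mul ξ M hM
  have hR₀ : 0 ≤ Q + P0 := (nonneg_iff_isPositive _).mpr hpos
  have hR₁ : Q + P0 ≤ 1 := sub_nonneg.mp ((nonneg_iff_isPositive _).mpr hle)
  have hcompress : 0 ≤ (1 - P0) * Q * (1 - P0) - P0 * Q * P0 - Q * Q := by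
    rw [hP0.compl_mul_mul_compl_sub_mul_mul_sub_mul_self Q, sub_nonneg]
    exact CStarAlgebra.mul_self_le_self hR₀ hR₁
  rw [← nonneg_iff_isPositive]
  convert hMsa.conjugate_nonneg hcompress using 1
  noncomm_ring

theorem stmt_4
    (ξ : EuclideanSpace ℝ (Fin 3) → ℝ) (hξmeas : Measurable ξ)
    (hξ01 : ∀ x, ξ x ∈ Set.Icc (0:ℝ) 1)
    (M : Lp ℂ 2 (volume : Measure (EuclideanSpace ℝ (Fin 3)))
        →L[ℂ] Lp ℂ 2 (volume : Measure (EuclideanSpace ℝ (Fin 3))))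
    (hM : ∀ f : Lp ℂ 2 (volume : Measure (EuclideanSpace ℝ (Fin 3))),
      (M f : EuclideanSpace ℝ (Fin 3) → ℂ) =ᵐ[volume] fun x => (ξ x : ℂ) * f x)
    (Q P0 : Lp ℂ 2 (volume : Measure (EuclideanSpace ℝ (Fin 3)))
        →L[ℂ] Lp ℂ 2 (volume : Measure (EuclideanSpace ℝ (Fin 3))))
    (hQsa : IsSelfAdjoint Q) (hQhs : IsHilbertSchmidt Q)
    (hP0 : IsIdempotentElem P0) (hP0sa : IsSelfAdjoint P0)
    (hpos : (Q + P0).IsPositive) (hle : (1 - (Q + P0)).IsPositive) :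
    (M * ((1 - P0) * Q * (1 - P0)) * M - M * (P0 * Q * P0) * M
      - M * (Q * Q) * M).IsPositive :=
  stmt_4_general ξ M hM Q P0 hP0 hpos hle
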